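/- arXiv:1707.07517 — 3 statements merged into one kernel-verified Lean document; each statement's English description precedes it below -/
import Mathlib

section
/- For N ≥ 3, the function E : [(N-2)/(N-1), 1] → ℝ defined by E(R) = ∫_0^R r^{N-1} dr + ∫_R^∞ c(R)² (N-2)² r^{1-N} dr, where c(R) = R^{N-2}(1-R), is non-decreasing, and hence attains its minimum at R̄ = (N-2)/(N-1), with E(R̄) = (2/N)((N-2)/(N-1))^{N-1}. -/
/-!
On `R > 0` both integrals are elementary and `E R = R ^ N / N + (N - 2) R ^ (N - 2) (1 - R) ^ 2`.
The derivative of this polynomial is the perfect square `R ^ (N - 3) ((N - 1) R - (N - 2)) ^ 2`,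
so `E` is non-decreasing on `[0, ∞)`, and its value at the double root `R = (N - 2) / (N - 1)`
of the derivative is a direct computation.
-/

open Set

theorem integral_Ioi_rpow_one_sub {p R : ℝ} (hp : 2 < p) (hR : 0 < R) :
    ∫ r in Ioi R, r ^ (1 - p) = R ^ (2 - p) / (p - 2) := by
  rw [integral_Ioi_rpow_of_lt (by linarith) hR, ← neg_div_neg_eq, neg_neg]
  ring_nf

noncomputable def radialEnergy (N : ℕ) (R : ℝ) : ℝ :=
  R ^ N / N + ((N : ℝ) - 2) * R ^ (N - 2) * (1 - R) ^ 2

theorem integrals_eq_radialEnergy {N : ℕ} (hN : 3 ≤ N) {R : ℝ} (hR : 0 < R) :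
    (∫ r in (0:ℝ)..R, r ^ (N - 1)) +
        ∫ r in Ioi R, (R ^ (N - 2) * (1 - R)) ^ 2 * ((N:ℝ) - 2) ^ 2 * r ^ ((1:ℝ) - N) =
      radialEnergy N R := by
  obtain ⟨n, rfl⟩ : ∃ n, N = n + 3 := ⟨N - 3, by omega⟩
  have hpow : R ^ ((2:ℝ) - ((n + 3 : ℕ) : ℝ)) = (R ^ (n + 1))⁻¹ := by
    rw [← Real.rpow_natCast, ← Real.rpow_neg hR.le]
    push_cast
    ring_nf
  rw [integral_pow, MeasureTheory.integral_const_mul,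
    integral_Ioi_rpow_one_sub (by push_cast; linarith) hR, hpow, radialEnergy]
  simp only [show n + 3 - 1 + 1 = n + 3 by omega, show n + 3 - 2 = n + 1 by omega]
  have : R ^ (n + 1) ≠ 0 := by positivity
  push_cast
  field_simp
  ring

theorem hasDerivAt_radialEnergy {N : ℕ} (hN : 3 ≤ N) (R : ℝ) :
    HasDerivAt (radialEnergy N) (R ^ (N - 3) * (((N : ℝ) - 1) * R - ((N : ℝ) - 2)) ^ 2) R := by
  obtain ⟨n, rfl⟩ : ∃ n, N = n + 3 := ⟨N - 3, by omega⟩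
  have hsq : HasDerivAt (fun R : ℝ => (1 - R) ^ 2) (2 * (1 - R) * (-1)) R := by
    simpa using ((hasDerivAt_id R).const_sub 1).fun_pow 2
  have := ((hasDerivAt_pow (n + 3) R).div_const ((n + 3 : ℕ) : ℝ)).fun_add
    (((hasDerivAt_pow (n + 3 - 2) R).const_mul (((n + 3 : ℕ) : ℝ) - 2)).fun_mul hsq)
  refine this.congr_deriv ?_
  simp only [show n + 3 - 1 = n + 2 by omega, show n + 3 - 2 = n + 1 by omega,
    Nat.add_sub_cancel]
  push_cast
  field_simp
  ring

theorem radialEnergy_monotoneOn {N : ℕ} (hN : 3 ≤ N) : MonotoneOn (radialEnergy N) (Ici 0) := by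
  refine monotoneOn_of_deriv_nonneg (convex_Ici 0)
    (fun R _ => (hasDerivAt_radialEnergy hN R).continuousAt.continuousWithinAt)
    (fun R _ => (hasDerivAt_radialEnergy hN R).differentiableAt.differentiableWithinAt) ?_
  intro R hR
  rw [interior_Ici] at hR
  rw [(hasDerivAt_radialEnergy hN R).deriv]
  have : 0 ≤ R := le_of_lt hR
  positivity

theorem radialEnergy_at_critical_point {N : ℕ} (hN : 2 ≤ N) :
    radialEnergy N (((N:ℝ) - 2) / ((N:ℝ) - 1)) =
      (2 / N) * (((N:ℝ) - 2) / ((N:ℝ) - 1)) ^ (N - 1) := by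
  obtain ⟨k, rfl⟩ : ∃ k, N = k + 2 := ⟨N - 2, by omega⟩
  have h2 : ((k + 2 : ℕ) : ℝ) - 2 = k := by push_cast; ring
  have h1 : ((k + 2 : ℕ) : ℝ) - 1 = k + 1 := by push_cast; ring
  rw [radialEnergy, h1, h2, show k + 2 - 1 = k + 1 by omega, Nat.add_sub_cancel, pow_succ, pow_add]
  have : (k : ℝ) + 1 ≠ 0 := by positivity
  push_cast
  field_simp
  ring

theorem energy_monotone_and_min (N : ℕ) (hN : 3 ≤ N) (E : ℝ → ℝ)
    (hE : ∀ R : ℝ, E R =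
      (∫ r in (0:ℝ)..R, r ^ (N - 1)) +
        ∫ r in Set.Ioi R, (R ^ (N - 2) * (1 - R)) ^ 2 * ((N:ℝ) - 2) ^ 2 * r ^ ((1:ℝ) - N)) :
    MonotoneOn E (Set.Icc (((N:ℝ) - 2) / ((N:ℝ) - 1)) 1) ∧
    (∀ R ∈ Set.Icc (((N:ℝ) - 2) / ((N:ℝ) - 1)) 1,
        E (((N:ℝ) - 2) / ((N:ℝ) - 1)) ≤ E R) ∧
    E (((N:ℝ) - 2) / ((N:ℝ) - 1)) = (2 / N) * (((N:ℝ) - 2) / ((N:ℝ) - 1)) ^ (N - 1) := by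
  set a := ((N:ℝ) - 2) / ((N:ℝ) - 1)
  have hN' : (3 : ℝ) ≤ N := by exact_mod_cast hN
  have ha : 0 < a := div_pos (by linarith) (by linarith)
  have ha_mem : a ∈ Icc a 1 := ⟨le_rfl, (div_le_one (by linarith)).2 (by linarith)⟩
  have hE_eq : EqOn (radialEnergy N) E (Icc a 1) := fun R hR =>
    (hE R ▸ integrals_eq_radialEnergy hN (ha.trans_le hR.1)).symm
  have hmono : MonotoneOn E (Icc a 1) :=
    ((radialEnergy_monotoneOn hN).mono fun R hR => ha.le.trans hR.1).congr hE_eq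
  refine ⟨hmono, fun R hR => hmono ha_mem hR hR.1, ?_⟩
  rw [← hE_eq ha_mem, radialEnergy_at_critical_point (by omega)]
end

section
/- Let N ≥ 3 and let u : ℝ^N → ℝ be defined radially by u(x) = 1 - |x| for |x| ≤ R and u(x) = R^{N-2}(1-R)|x|^{2-N} for |x| ≥ R, with R = (N-2)/(N-1). Then u is Lipschitz with Lipschitz constant 1, ‖u‖_{L^∞} = 1, and ∫_{ℝ^N} |∇u|² dx = (2/N)((N-2)/(N-1))^{N-1} ω_{N-1}, where ω_{N-1} is the surface measure of the unit sphere in ℝ^N. -/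
open MeasureTheory

/-- Surface measure of the unit sphere in `ℝ^N`. -/
noncomputable def sphereMeasure (N : ℕ) : ℝ :=
  (N : ℝ) * (volume (Metric.ball (0 : EuclideanSpace ℝ (Fin N)) 1)).toReal

/-!
On each ray `u` is the profile `f r = 1 - r` for `r ≤ R` and `f r = R^(N-2) (1 - R) r^(2-N)` for
`r ≥ R`. The choice of `R` makes `(1 - R)(N - 2) = R`, so the two pieces match to first order at
`R`: `f` is differentiable on all of `ℝ`, with `f' = -1` on `r ≤ R` and `f' r = -(R/r)^(N-1)`
beyond. Since `f' ∈ [-1, 0]`, `f` is `1`-Lipschitz and antitone, so `0 ≤ u ≤ u 0 = 1`.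
Off the origin `‖∇u(x)‖ = |f'(‖x‖)|`, so polar coordinates turn the Dirichlet energy into
`N |B₁| (∫₀^R r^(N-1) dr + R^(2N-2) ∫_R^∞ r^(1-N) dr) = N |B₁| (R^N/N + R^N/(N-2))`.
-/

open Set Real

theorem hasDerivAt_ite_le {E : Type*} [NormedAddCommGroup E] [NormedSpace ℝ E]
    {f g f' g' : ℝ → E} {a : ℝ}
    (hf : ∀ x ≤ a, HasDerivAt f (f' x) x) (hg : ∀ x ≥ a, HasDerivAt g (g' x) x)
    (hfg : f a = g a) (hfg' : f' a = g' a) (x : ℝ) :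
    HasDerivAt (fun y ↦ if y ≤ a then f y else g y) (if x ≤ a then f' x else g' x) x := by
  rcases lt_trichotomy x a with hxa | rfl | hax
  · rw [if_pos hxa.le]
    refine (hf x hxa.le).congr_of_eventuallyEq ?_
    filter_upwards [Iio_mem_nhds hxa] with y hy using if_pos (le_of_lt hy)
  · rw [if_pos le_rfl, ← hasDerivWithinAt_univ, ← Iic_union_Ici]
    refine .union ((hf x le_rfl).hasDerivWithinAt.congr (fun y hy ↦ if_pos hy) (if_pos le_rfl))
      ((hfg' ▸ hg x le_rfl).hasDerivWithinAt.congr (fun y hy ↦ ?_) (by simp [hfg]))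
    rcases (mem_Ici.1 hy).eq_or_lt with rfl | hxy
    · simp [hfg]
    · exact if_neg hxy.not_ge
  · rw [if_neg hax.not_ge]
    refine (hg x hax.le).congr_of_eventuallyEq ?_
    filter_upwards [Ioi_mem_nhds hax] with y hy using if_neg (not_le.2 hy)

theorem norm_fderiv_comp_norm {E : Type*} [NormedAddCommGroup E] [InnerProductSpace ℝ E]
    {f : ℝ → ℝ} {f' : ℝ} {x : E} (hx : x ≠ 0) (hf : HasDerivAt f f' ‖x‖) :
    ‖fderiv ℝ (fun y ↦ f ‖y‖) x‖ = |f'| := by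
  have : Nontrivial E := nontrivial_of_ne x 0 hx
  have hnorm : DifferentiableAt ℝ (‖·‖) x := differentiableAt_id.norm ℝ hx
  have hcomp : HasFDerivAt (fun y ↦ f ‖y‖) (f' • fderiv ℝ (‖·‖) x) x :=
    hf.comp_hasFDerivAt x hnorm.hasFDerivAt
  rw [hcomp.fderiv, norm_smul, norm_fderiv_norm hnorm, mul_one, Real.norm_eq_abs]

theorem rpow_eq_inv_pow {x a : ℝ} {k : ℕ} (hx : 0 ≤ x) (ha : a = -k) : x ^ a = (x ^ k)⁻¹ := by
  rw [ha, rpow_neg hx, rpow_natCast]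

noncomputable def minimizerRadius (N : ℕ) : ℝ := ((N : ℝ) - 2) / ((N : ℝ) - 1)

noncomputable def minimizerProfile (N : ℕ) (r : ℝ) : ℝ :=
  if r ≤ minimizerRadius N then 1 - r
  else minimizerRadius N ^ (N - 2) * (1 - minimizerRadius N) * r ^ ((2 : ℝ) - N)

noncomputable def minimizerProfileDeriv (N : ℕ) (r : ℝ) : ℝ :=
  if r ≤ minimizerRadius N then -1 else -(minimizerRadius N / r) ^ (N - 1)

section

variable {N : ℕ} (hN : 3 ≤ N)
include hN

local notation "R" => minimizerRadius N

theorem minimizerRadius_pos : 0 < R := by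
  have : (3 : ℝ) ≤ N := by exact_mod_cast hN
  unfold minimizerRadius
  exact div_pos (by linarith) (by linarith)

theorem minimizerRadius_lt_one : R < 1 := by
  have : (3 : ℝ) ≤ N := by exact_mod_cast hN
  unfold minimizerRadius
  rw [div_lt_one (by linarith)]
  linarith

theorem one_sub_minimizerRadius_mul : (1 - R) * ((N : ℝ) - 2) = R := by
  have : (3 : ℝ) ≤ N := by exact_mod_cast hN
  have : (N : ℝ) - 1 ≠ 0 := by linarith
  unfold minimizerRadius
  field_simp
  ring

theorem minimizerRadius_pow_mul_one_sub :
    R ^ (N - 2) * (1 - R) * ((N : ℝ) - 2) = R ^ (N - 1) := by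
  rw [mul_assoc, one_sub_minimizerRadius_mul hN, ← pow_succ]
  congr 1
  omega

theorem hasDerivAt_minimizerProfile (r : ℝ) :
    HasDerivAt (minimizerProfile N) (minimizerProfileDeriv N r) r := by
  have hR := minimizerRadius_pos hN
  have hcast1 : (2 : ℝ) - N - 1 = -((N - 1 : ℕ) : ℝ) := by
    rw [Nat.cast_sub (by omega)]; push_cast; ring
  have hcast2 : (2 : ℝ) - N = -((N - 2 : ℕ) : ℝ) := by
    rw [Nat.cast_sub (by omega)]; push_cast; ring
  have houter : ∀ s ≥ R, HasDerivAt (fun s ↦ R ^ (N - 2) * (1 - R) * s ^ ((2 : ℝ) - N))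
      (-(R / s) ^ (N - 1)) s := by
    intro s hs
    have hs0 : 0 < s := hR.trans_le hs
    refine ((hasDerivAt_rpow_const (Or.inl hs0.ne')).const_mul _).congr_deriv ?_
    rw [rpow_eq_inv_pow hs0.le hcast1, div_pow, ← minimizerRadius_pow_mul_one_sub hN]
    ring
  refine hasDerivAt_ite_le (fun s _ ↦ (hasDerivAt_id' s).const_sub 1) houter ?_ ?_ r
  · rw [rpow_eq_inv_pow hR.le hcast2, mul_right_comm, mul_inv_cancel₀ (by positivity), one_mul]
  · rw [div_self hR.ne', one_pow]

theorem minimizerProfileDeriv_mem_Icc (r : ℝ) : minimizerProfileDeriv N r ∈ Icc (-1) 0 := by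
  unfold minimizerProfileDeriv
  split_ifs with hr
  · norm_num
  · have hR := minimizerRadius_pos hN
    have hr0 : 0 < r := hR.trans (not_le.1 hr)
    have : R / r ≤ 1 := (div_le_one hr0).2 (not_le.1 hr).le
    constructor
    · linarith [pow_le_one₀ (by positivity : 0 ≤ R / r) this (n := N - 1)]
    · linarith [pow_nonneg (by positivity : 0 ≤ R / r) (N - 1)]

theorem lipschitzWith_minimizerProfile : LipschitzWith 1 (minimizerProfile N) := by
  refine lipschitzWith_of_nnnorm_deriv_le
    (fun r ↦ (hasDerivAt_minimizerProfile hN r).differentiableAt) fun r ↦ ?_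
  obtain ⟨hlower, hupper⟩ := minimizerProfileDeriv_mem_Icc hN r
  rw [(hasDerivAt_minimizerProfile hN r).deriv, ← NNReal.coe_le_coe, coe_nnnorm, NNReal.coe_one,
    Real.norm_eq_abs, abs_le]
  exact ⟨hlower, by linarith⟩

theorem minimizerProfile_nonneg (r : ℝ) : 0 ≤ minimizerProfile N r := by
  have := minimizerRadius_lt_one hN
  unfold minimizerProfile
  split_ifs with hr
  · linarith
  · have := minimizerRadius_pos hN
    have : 0 < r := this.trans (not_le.1 hr)
    positivity

theorem minimizerProfile_zero : minimizerProfile N 0 = 1 := by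
  simp [minimizerProfile, (minimizerRadius_pos hN).le]

theorem minimizerProfile_le_one {r : ℝ} (hr : 0 ≤ r) : minimizerProfile N r ≤ 1 := by
  have hanti : Antitone (minimizerProfile N) := antitone_of_hasDerivAt_nonpos
    (hasDerivAt_minimizerProfile hN) fun r ↦ (minimizerProfileDeriv_mem_Icc hN r).2
  calc minimizerProfile N r ≤ minimizerProfile N 0 := hanti hr
    _ = 1 := minimizerProfile_zero hN

theorem abs_minimizerProfile_le_one {r : ℝ} (hr : 0 ≤ r) : |minimizerProfile N r| ≤ 1 :=
  abs_le.2 ⟨by linarith [minimizerProfile_nonneg hN r], minimizerProfile_le_one hN hr⟩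

theorem integral_pow_mul_minimizerProfileDeriv_sq :
    ∫ r in Ioi (0 : ℝ), r ^ (N - 1) * minimizerProfileDeriv N r ^ 2 = 2 / N * R ^ (N - 1) := by
  have hR := minimizerRadius_pos hN
  have hN3 : (3 : ℝ) ≤ N := by exact_mod_cast hN
  have hinner : EqOn (fun r ↦ r ^ (N - 1) * minimizerProfileDeriv N r ^ 2) (fun r ↦ r ^ (N - 1))
      (Ioc 0 R) := fun r hr ↦ by simp [minimizerProfileDeriv, hr.2]
  have houter : EqOn (fun r ↦ r ^ (N - 1) * minimizerProfileDeriv N r ^ 2)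
      (fun r ↦ R ^ (2 * (N - 1)) * r ^ ((1 : ℝ) - N)) (Ioi R) := fun r hr ↦ by
    have hr0 : 0 < r := hR.trans hr
    have hcast : (1 : ℝ) - N = -((N - 1 : ℕ) : ℝ) := by
      rw [Nat.cast_sub (by omega)]; push_cast; ring
    simp only [minimizerProfileDeriv, if_neg (not_le.2 (mem_Ioi.1 hr))]
    rw [rpow_eq_inv_pow hr0.le hcast, neg_sq, ← pow_mul, div_pow]
    field_simp
    ring
  have hint_inner :
      IntegrableOn (fun r ↦ r ^ (N - 1) * minimizerProfileDeriv N r ^ 2) (Ioc 0 R) :=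
    ((continuous_pow (N - 1)).integrableOn_Icc.mono_set Ioc_subset_Icc_self).congr_fun
      hinner.symm measurableSet_Ioc
  have hint_outer : IntegrableOn (fun r ↦ r ^ (N - 1) * minimizerProfileDeriv N r ^ 2) (Ioi R) :=
    IntegrableOn.congr_fun ((integrableOn_Ioi_rpow_of_lt (by linarith) hR).const_mul _)
      houter.symm measurableSet_Ioi
  have hval_inner : ∫ r in Ioc 0 R, r ^ (N - 1) * minimizerProfileDeriv N r ^ 2 = R ^ N / N := by
    rw [setIntegral_congr_fun measurableSet_Ioc hinner, ← intervalIntegral.integral_of_le hR.le,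
      integral_pow, Nat.sub_add_cancel (by omega), zero_pow (by omega), sub_zero,
      Nat.cast_sub (by omega)]
    simp
  have hval_outer : ∫ r in Ioi R, r ^ (N - 1) * minimizerProfileDeriv N r ^ 2 =
      R ^ N / ((N : ℝ) - 2) := by
    have hcast : (1 : ℝ) - N + 1 = -((N - 2 : ℕ) : ℝ) := by
      rw [Nat.cast_sub (by omega)]; push_cast; ring
    rw [setIntegral_congr_fun measurableSet_Ioi houter, integral_const_mul,
      integral_Ioi_rpow_of_lt (by linarith) hR, hcast, rpow_eq_inv_pow hR.le rfl,
      show 2 * (N - 1) = N + (N - 2) by omega, pow_add, Nat.cast_sub (by omega)]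
    push_cast
    field_simp
  rw [← Ioc_union_Ioi_eq_Ioi hR.le, setIntegral_union Ioc_disjoint_Ioi_same measurableSet_Ioi
    hint_inner hint_outer, hval_inner, hval_outer]
  have hsum : R / N + R / ((N : ℝ) - 2) = 2 / N := by
    have : (N : ℝ) - 1 ≠ 0 := by linarith
    have : (N : ℝ) - 2 ≠ 0 := by linarith
    unfold minimizerRadius
    field_simp
    ring
  rw [← pow_sub_one_mul (by omega)]
  linear_combination R ^ (N - 1) * hsum

end

theorem explicit_minimizer (N : ℕ) (hN : 3 ≤ N)
    (R : ℝ) (hR : R = ((N:ℝ) - 2) / ((N:ℝ) - 1))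
    (u : EuclideanSpace ℝ (Fin N) → ℝ)
    (hu : ∀ x, (‖x‖ ≤ R → u x = 1 - ‖x‖) ∧
      (R ≤ ‖x‖ → u x = R ^ (N - 2) * (1 - R) * ‖x‖ ^ ((2:ℝ) - N))) :
    LipschitzWith 1 u ∧ (∀ x, |u x| ≤ 1) ∧ u 0 = 1 ∧
      ∫ x, ‖fderiv ℝ u x‖ ^ 2 =
        (2 / N) * (((N:ℝ) - 2) / ((N:ℝ) - 1)) ^ (N - 1) * sphereMeasure N := by
  obtain rfl : R = minimizerRadius N := hR
  obtain rfl : u = fun x : EuclideanSpace ℝ (Fin N) ↦ minimizerProfile N ‖x‖ := funext fun x ↦ by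
    unfold minimizerProfile
    split_ifs with hx
    · exact (hu x).1 hx
    · exact (hu x).2 (not_le.1 hx).le
  have : Nonempty (Fin N) := ⟨⟨0, by omega⟩⟩
  have hgrad : ∀ᵐ x : EuclideanSpace ℝ (Fin N),
      ‖fderiv ℝ (fun y ↦ minimizerProfile N ‖y‖) x‖ ^ 2 = minimizerProfileDeriv N ‖x‖ ^ 2 := by
    filter_upwards [Measure.ae_ne volume 0] with x hx
    rw [norm_fderiv_comp_norm hx (hasDerivAt_minimizerProfile hN _), sq_abs]
  have hlip : LipschitzWith (1 * 1) fun x : EuclideanSpace ℝ (Fin N) ↦ minimizerProfile N ‖x‖ :=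
    (lipschitzWith_minimizerProfile hN).comp lipschitzWith_one_norm
  rw [mul_one] at hlip
  refine ⟨hlip, fun x ↦ abs_minimizerProfile_le_one hN (norm_nonneg x),
    by simpa using minimizerProfile_zero hN, ?_⟩
  rw [integral_congr_ae hgrad,
    integral_fun_norm_addHaar volume (fun r ↦ minimizerProfileDeriv N r ^ 2),
    finrank_euclideanSpace_fin]
  simp only [smul_eq_mul, nsmul_eq_mul, integral_pow_mul_minimizerProfileDeriv_sq hN,
    sphereMeasure, measureReal_def, minimizerRadius]
  ring
end

section
/- Let N ≥ 3, a ≠ 0, and let ũ : (0,∞) → ℝ be defined by ũ(r) = ∫_r^∞ (a/ω)/sqrt(s^{2(N-1)} + (a/ω)²) ds, where ω = ω_{N-1} > 0. Then ũ is well-defined (the integral converges), ũ satisfies r^{N-1} ũ'(r)/sqrt(1 - ũ'(r)²) = -a/ω for all r > 0, |ũ'(r)| < 1 for r > 0, and lim_{r→∞} ũ(r) = 0. -/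
/-!
With `c = a / ω` and `t = s ^ (N - 1)` the integrand is `c / √(t² + c²)`, which is bounded by
`|c| / s ^ (N - 1)` and hence integrable at infinity as `N - 1 ≥ 2`. Thus `u` is a tail integral
of a continuous integrable function: its derivative is minus the integrand and it vanishes at
infinity. For `d = -c / √(t² + c²)` one has `1 - d² = t² / (t² + c²)`, which turns
`t d / √(1 - d²)` into `-c`.
-/

open MeasureTheory Set Filter Topology

section TailIntegral

variable {f : ℝ → ℝ} {a : ℝ}

theorem hasDerivAt_integral_Ioi (hf : IntegrableOn f (Ioi a)) {r : ℝ} (har : a < r)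
    (hcont : ContinuousAt f r) :
    HasDerivAt (fun x => ∫ s in Ioi x, f s) (-f r) r := by
  have hprimitive : HasDerivAt (fun x => ∫ s in a..x, f s) (f r) r :=
    intervalIntegral.integral_hasDerivAt_right
      ((intervalIntegrable_iff_integrableOn_Ioc_of_le har.le).2 (hf.mono_set Ioc_subset_Ioi_self))
      ⟨Ioi a, Ioi_mem_nhds har, hf.aestronglyMeasurable⟩ hcont
  refine (hprimitive.const_sub (∫ s in Ioi a, f s)).congr_of_eventuallyEq ?_
  filter_upwards [Ioi_mem_nhds har] with x hx
  rw [← intervalIntegral.integral_Ioi_sub_Ioi hf hx.le, sub_sub_cancel]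

theorem tendsto_integral_Ioi_atTop (hf : IntegrableOn f (Ioi a)) :
    Tendsto (fun x => ∫ s in Ioi x, f s) atTop (𝓝 0) := by
  have hprimitive := (intervalIntegral_tendsto_integral_Ioi a hf tendsto_id).const_sub
    (∫ s in Ioi a, f s)
  rw [sub_self] at hprimitive
  refine hprimitive.congr' ?_
  filter_upwards [eventually_ge_atTop a] with x hx
  rw [id, ← intervalIntegral.integral_Ioi_sub_Ioi hf hx, sub_sub_cancel]

end TailIntegral

section BornInfeldProfile

variable {t : ℝ} (c : ℝ)

theorem abs_div_sqrt_sq_add_sq_le (ht : 0 < t) : |c / √(t ^ 2 + c ^ 2)| ≤ |c| / t := by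
  rw [abs_div, abs_of_pos (by positivity : 0 < √(t ^ 2 + c ^ 2))]
  exact div_le_div_of_nonneg_left (abs_nonneg c) ht
    (Real.le_sqrt_of_sq_le (le_add_of_nonneg_right (sq_nonneg c)))

theorem abs_div_sqrt_sq_add_sq_lt_one (ht : t ≠ 0) : |c / √(t ^ 2 + c ^ 2)| < 1 := by
  have hpos : 0 < √(t ^ 2 + c ^ 2) := by positivity
  rw [abs_div, abs_of_pos hpos, div_lt_one hpos, Real.lt_sqrt (abs_nonneg c), sq_abs]
  have : 0 < t ^ 2 := by positivity
  linarith

theorem mul_neg_div_sqrt_one_sub_sq (ht : 0 < t) :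
    t * -(c / √(t ^ 2 + c ^ 2)) / √(1 - (-(c / √(t ^ 2 + c ^ 2))) ^ 2) = -c := by
  have hA : 0 < t ^ 2 + c ^ 2 := by positivity
  have hsqrt : √(1 - (-(c / √(t ^ 2 + c ^ 2))) ^ 2) = t / √(t ^ 2 + c ^ 2) := by
    rw [neg_sq, div_pow, Real.sq_sqrt hA.le, one_sub_div hA.ne', add_sub_cancel_right,
      Real.sqrt_div' _ hA.le, Real.sqrt_sq ht.le]
  rw [hsqrt]
  field_simp

variable {m : ℕ}

theorem continuousOn_div_sqrt_pow_sq_add_sq :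
    ContinuousOn (fun s : ℝ => c / √((s ^ m) ^ 2 + c ^ 2)) (Ioi 0) :=
  continuousOn_const.div (by fun_prop) fun s (hs : 0 < s) => by positivity

theorem integrableOn_Ioi_div_sqrt_pow_sq_add_sq (hm : 2 ≤ m) {r : ℝ} (hr : 0 < r) :
    IntegrableOn (fun s : ℝ => c / √((s ^ m) ^ 2 + c ^ 2)) (Ioi r) := by
  have hexp : -(m : ℝ) < -1 := by
    have : (2 : ℝ) ≤ m := by exact_mod_cast hm
    linarith
  refine Integrable.mono' ((integrableOn_Ioi_rpow_of_lt hexp hr).const_mul |c|)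
    (((continuousOn_div_sqrt_pow_sq_add_sq c).mono (Ioi_subset_Ioi hr.le)).aestronglyMeasurable
      measurableSet_Ioi) ?_
  filter_upwards [ae_restrict_mem measurableSet_Ioi] with s (hs : r < s)
  have hs0 : 0 < s := hr.trans hs
  rw [Real.norm_eq_abs, Real.rpow_neg hs0.le, Real.rpow_natCast, ← div_eq_mul_inv]
  exact abs_div_sqrt_sq_add_sq_le c (pow_pos hs0 m)

end BornInfeldProfile

theorem radial_fundamental_solution_general (N : ℕ) (hN : 3 ≤ N)
    (a ω : ℝ)
    (u : ℝ → ℝ)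
    (hu : ∀ r : ℝ, u r = ∫ s in Set.Ioi r,
      (a / ω) / Real.sqrt (s ^ (2 * (N - 1)) + (a / ω) ^ 2)) :
    (∀ r : ℝ, 0 < r → IntegrableOn
        (fun s => (a / ω) / Real.sqrt (s ^ (2 * (N - 1)) + (a / ω) ^ 2)) (Set.Ioi r)) ∧
    (∀ r : ℝ, 0 < r → ∃ d : ℝ, HasDerivAt u d r ∧
        r ^ (N - 1) * d / Real.sqrt (1 - d ^ 2) = -(a / ω) ∧ |d| < 1) ∧
    Tendsto u atTop (nhds 0) := by
  set c := a / ω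
  simp_rw [pow_mul'] at hu ⊢
  obtain rfl : u = fun x => ∫ s in Ioi x, c / √((s ^ (N - 1)) ^ 2 + c ^ 2) := funext hu
  have hint (r : ℝ) (hr : 0 < r) :=
    integrableOn_Ioi_div_sqrt_pow_sq_add_sq c (show 2 ≤ N - 1 by omega) hr
  refine ⟨hint, fun r hr => ?_, tendsto_integral_Ioi_atTop (hint 1 one_pos)⟩
  have hrm : 0 < r ^ (N - 1) := pow_pos hr _
  refine ⟨_, hasDerivAt_integral_Ioi (hint (r / 2) (half_pos hr)) (half_lt_self hr)
    ((continuousOn_div_sqrt_pow_sq_add_sq c).continuousAt (Ioi_mem_nhds hr)),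
    mul_neg_div_sqrt_one_sub_sq c hrm, ?_⟩
  exact (abs_neg _).trans_lt (abs_div_sqrt_sq_add_sq_lt_one c hrm.ne')

theorem radial_fundamental_solution (N : ℕ) (hN : 3 ≤ N)
    (a ω : ℝ) (ha : a ≠ 0) (hω : 0 < ω)
    (u : ℝ → ℝ)
    (hu : ∀ r : ℝ, u r = ∫ s in Set.Ioi r,
      (a / ω) / Real.sqrt (s ^ (2 * (N - 1)) + (a / ω) ^ 2)) :
    (∀ r : ℝ, 0 < r → IntegrableOn
        (fun s => (a / ω) / Real.sqrt (s ^ (2 * (N - 1)) + (a / ω) ^ 2)) (Set.Ioi r)) ∧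
    (∀ r : ℝ, 0 < r → ∃ d : ℝ, HasDerivAt u d r ∧
        r ^ (N - 1) * d / Real.sqrt (1 - d ^ 2) = -(a / ω) ∧ |d| < 1) ∧
    Tendsto u atTop (nhds 0) :=
  radial_fundamental_solution_general N hN a ω u hu
end
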